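/- For every n ≥ 1, the polynomial identity P^D_n(t) = (2nt − t + 1)·P^D_{n−1}(t) + 2t(1−t)·(d/dt)P^D_{n−1}(t) − t(1−t)^{n−1} holds. -/

import Mathlib

open MeasureTheory Finset

/-- Number of descents of a finite sequence given as a list. -/
def descCount {α : Type*} [LT α] [DecidableRel ((· < ·) : α → α → Prop)] : List α → ℕ
  | a :: b :: rest => (if b < a then 1 else 0) + descCount (b :: rest)
  | _ => 0

/-- Type A Eulerian number: permutations of {1,…,n} with k descents. -/
def eulerianA (n k : ℕ) : ℕ :=
  Fintype.card {σ : Equiv.Perm (Fin n) // descCount (List.ofFn fun i => σ i) = k}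

/-- Eulerian polynomial of type A. -/
noncomputable def polyA (n : ℕ) (t : ℝ) : ℝ :=
  ∑ k ∈ Finset.range (n + 1), (eulerianA n k : ℝ) * t ^ k

/-- The underlying set {-n, …, -1, 0, 1, …, n}. -/
abbrev BSet (n : ℕ) : Type := {x : ℤ // x ∈ Finset.Icc (-(n : ℤ)) (n : ℤ)}

def negB {n : ℕ} (x : BSet n) : BSet n :=
  ⟨-x.1, by have := x.2; simp only [Finset.mem_Icc] at *; omega⟩

def posB {n : ℕ} (i : Fin n) : BSet n :=
  ⟨((i : ℕ) : ℤ) + 1, by have := i.isLt; simp only [Finset.mem_Icc]; omega⟩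

/-- A permutation of {-n,…,n} is a signed permutation if σ(-k) = -σ(k). -/
def IsSigned {n : ℕ} (σ : Equiv.Perm (BSet n)) : Prop :=
  ∀ x : BSet n, (σ (negB x)).1 = -((σ x).1)

noncomputable instance {n : ℕ} (σ : Equiv.Perm (BSet n)) : Decidable (IsSigned σ) :=
  inferInstanceAs (Decidable (∀ x : BSet n, (σ (negB x)).1 = -((σ x).1)))

/-- Number of descents of the sequence (0, σ(1), …, σ(n)). -/
def descB {n : ℕ} (σ : Equiv.Perm (BSet n)) : ℕ :=
  descCount ((0 : ℤ) :: List.ofFn fun i : Fin n => (σ (posB i)).1)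

/-- Number of negative terms among σ(1), …, σ(n). -/
def negCount {n : ℕ} (σ : Equiv.Perm (BSet n)) : ℕ :=
  (Finset.univ.filter fun i : Fin n => (σ (posB i)).1 < 0).card

/-- Type B Eulerian number. -/
noncomputable def eulerianB (n k : ℕ) : ℕ :=
  Fintype.card {σ : Equiv.Perm (BSet n) // IsSigned σ ∧ descB σ = k}

/-- Primary type D Eulerian number. -/
noncomputable def eulerianD (n k : ℕ) : ℕ :=
  Fintype.card {σ : Equiv.Perm (BSet n) //
    (IsSigned σ ∧ Even (negCount σ)) ∧ descB σ = k}

/-- Complementary type D Eulerian number. -/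
noncomputable def eulerianDt (n k : ℕ) : ℕ :=
  Fintype.card {σ : Equiv.Perm (BSet n) //
    (IsSigned σ ∧ ¬ Even (negCount σ)) ∧ descB σ = k}

noncomputable def polyB (n : ℕ) (t : ℝ) : ℝ :=
  ∑ k ∈ Finset.range (n + 1), (eulerianB n k : ℝ) * t ^ k

noncomputable def polyD (n : ℕ) (t : ℝ) : ℝ :=
  ∑ k ∈ Finset.range (n + 1), (eulerianD n k : ℝ) * t ^ k

noncomputable def polyDt (n : ℕ) (t : ℝ) : ℝ :=
  ∑ k ∈ Finset.range (n + 1), (eulerianDt n k : ℝ) * t ^ k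

noncomputable def polyDP (n : ℕ) : Polynomial ℝ :=
  ∑ k ∈ Finset.range (n + 1), Polynomial.C (eulerianD n k : ℝ) * Polynomial.X ^ k

/-!
Encode a signed permutation by its absolute values and its signs. Every signed permutation of
`n + 1` arises exactly once by inserting `n + 1` or `-(n + 1)` into one of the `n + 1` slots of a
signed permutation of `n`. Since the new entry exceeds all others in absolute value, the number of
descents of `0, w₁, …` grows by one, except when the slot splits a descent, or is the last slot
and the entry is positive. Summed over all slots, this acts on descent polynomials by the operator
`L f = n t f + t (1 - t) f'`, plus `f` or `t f` according to the sign. Weighting by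
`c ^ (number of negative entries)` gives `W_c(n + 1) = (1 + c) L W_c(n) + (1 + c t) W_c(n)`.
Thus `W_{-1}(n) = (1 - t) ^ n`, which `L` annihilates, and the recurrence for
`P^D_n = (W_1(n) + W_{-1}(n)) / 2` follows from the one for `W_1`.
-/

open Polynomial

section Descents

variable {α : Type*} [LinearOrder α] {k : ℕ}

def descents (v : Fin (k + 1) → α) : Finset (Fin k) :=
  univ.filter fun i => v i.succ < v i.castSucc

lemma descCount_ofFn : ∀ {k : ℕ} (v : Fin (k + 1) → α),
    descCount (List.ofFn v) = #(descents v)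
  | 0, v => by simp [List.ofFn_succ, descCount, descents]
  | k + 1, v => by
    have hcons : descCount (List.ofFn v) =
        (if v (Fin.succ 0) < v 0 then 1 else 0) + descCount (List.ofFn fun i => v i.succ) := by
      rw [List.ofFn_succ, List.ofFn_succ]
      rfl
    rw [hcons, descCount_ofFn, descents, descents, card_filter, card_filter, Fin.sum_univ_succ]
    rfl

lemma card_descents_insertNth (v : Fin (k + 1) → α) (q : Fin (k + 1)) (x : α) :
    #(descents (Fin.insertNth q.succ x v)) = (if x < v q then 1 else 0) +
      ∑ i : Fin k, if v i.succ < (if i.castSucc = q then x else v i.castSucc) then 1 else 0 := by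
  rw [descents, card_filter, Fin.sum_univ_succAbove _ q, ← Fin.succAbove_succ_self,
    Fin.insertNth_apply_same, Fin.insertNth_apply_succAbove]
  congr 1
  refine sum_congr rfl fun i _ => ?_
  rw [← Fin.succ_succAbove_succ, Fin.insertNth_apply_succAbove]
  congr 3
  rcases lt_trichotomy i.castSucc q with h | h | h
  · rw [if_neg h.ne, Fin.succAbove_of_castSucc_lt _ _ h,
      ← Fin.succAbove_of_castSucc_lt q.succ i.castSucc (by simpa using h.le),
      Fin.insertNth_apply_succAbove]
  · rw [if_pos h, Fin.succAbove_of_le_castSucc _ _ h.ge, ← Fin.succ_castSucc, h,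
      Fin.insertNth_apply_same]
  · rw [if_neg h.ne', Fin.succAbove_of_le_castSucc _ _ h.le, ← Fin.succ_castSucc,
      ← Fin.succAbove_of_le_castSucc q.succ i.castSucc (by simpa using h),
      Fin.insertNth_apply_succAbove]

/-- An entry exceeding, or preceding, all others creates a descent on exactly one side. -/
lemma card_descents_insertNth_castSucc (v : Fin (k + 1) → α) (i₀ : Fin k) {x : α}
    (hx : (∀ j, v j < x) ∨ ∀ j, x < v j) :
    #(descents (Fin.insertNth i₀.castSucc.succ x v)) =
      #(descents v) + if i₀ ∈ descents v then 0 else 1 := by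
  have hrest : ∑ i ∈ {i₀}ᶜ,
      (if v i.succ < (if i.castSucc = i₀.castSucc then x else v i.castSucc) then 1 else 0) =
        ∑ i ∈ {i₀}ᶜ, if v i.succ < v i.castSucc then 1 else 0 :=
    sum_congr rfl fun i hi => by
      rw [if_neg (Fin.castSucc_injective _ |>.ne (by simpa using hi))]
  rw [card_descents_insertNth, Fintype.sum_eq_add_sum_compl i₀, if_pos rfl, hrest, descents,
    card_filter, Fintype.sum_eq_add_sum_compl i₀]
  simp only [mem_filter, mem_univ, true_and]
  rcases hx with hx | hx
  · rw [if_neg (hx _).not_gt, if_pos (hx _)]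
    split_ifs <;> omega
  · rw [if_pos (hx _), if_neg (hx _).not_gt]
    split_ifs <;> omega

lemma card_descents_insertNth_last (v : Fin (k + 1) → α) (x : α) :
    #(descents (Fin.insertNth (Fin.last k).succ x v)) =
      #(descents v) + if x < v (Fin.last k) then 1 else 0 := by
  rw [card_descents_insertNth, add_comm, descents, card_filter]
  congr 1
  exact sum_congr rfl fun i _ => by rw [if_neg (Fin.castSucc_lt_last i).ne]

end Descents

section EulerOperator

variable {R : Type*} [CommRing R]

variable (R) in
noncomputable def eulerOp (n : ℕ) : R[X] →ₗ[R] R[X] :=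
  LinearMap.mulLeft R ((n : R[X]) * X) + LinearMap.mulLeft R (X * (1 - X)) ∘ₗ derivative

lemma eulerOp_apply (n : ℕ) (f : R[X]) :
    eulerOp R n f = (n : R[X]) * X * f + X * (1 - X) * derivative f := rfl

lemma eulerOp_C_mul (n : ℕ) (a : R) (f : R[X]) :
    eulerOp R n (C a * f) = C a * eulerOp R n f := by
  rw [← smul_eq_C_mul, map_smul, smul_eq_C_mul]

lemma eulerOp_X_pow {n d : ℕ} (h : d ≤ n) :
    eulerOp R n (X ^ d) = d • (X ^ d : R[X]) + (n - d) • X ^ (d + 1) := by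
  rw [eulerOp_apply, derivative_X_pow, nsmul_eq_mul, nsmul_eq_mul, Nat.cast_sub h]
  cases d with
  | zero => simp
  | succ d => simp only [Nat.add_sub_cancel, map_natCast, pow_succ]; push_cast; ring

lemma eulerOp_one_sub_X_pow (n : ℕ) : eulerOp R n ((1 - X : R[X]) ^ n) = 0 := by
  rw [eulerOp_apply, derivative_pow, derivative_sub, derivative_one, derivative_X]
  cases n with
  | zero => simp
  | succ n => simp only [Nat.add_sub_cancel, map_natCast, pow_succ]; push_cast; ring

end EulerOperator

section SignedSets

variable {n : ℕ}

def zeroB (n : ℕ) : BSet n := ⟨0, by simp⟩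

@[simp] lemma negB_negB (x : BSet n) : negB (negB x) = x := Subtype.ext (neg_neg x.1)

lemma BSet.natAbs_val_le (x : BSet n) : x.1.natAbs ≤ n := by
  have := mem_Icc.1 x.2
  omega

def BSet.absIndex (x : BSet n) (hx : x.1 ≠ 0) : Fin n :=
  ⟨x.1.natAbs - 1, by have := BSet.natAbs_val_le x; omega⟩

@[elab_as_elim]
lemma BSet.signCases {motive : BSet n → Prop} (x : BSet n) (zero : motive (zeroB n))
    (pos : ∀ i, motive (posB i)) (neg : ∀ i, motive (negB (posB i))) : motive x := by
  have hx := BSet.natAbs_val_le x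
  rcases lt_trichotomy x.1 0 with h | h | h
  · convert neg ⟨x.1.natAbs - 1, by omega⟩
    exact Subtype.ext (by simp only [negB, posB]; omega)
  · convert zero
    exact Subtype.ext h
  · convert pos ⟨x.1.natAbs - 1, by omega⟩
    exact Subtype.ext (by simp only [posB]; omega)

lemma IsSigned.map_negB {σ : Equiv.Perm (BSet n)} (hσ : IsSigned σ) (x : BSet n) :
    σ (negB x) = negB (σ x) :=
  Subtype.ext (hσ x)

lemma IsSigned.map_zeroB {σ : Equiv.Perm (BSet n)} (hσ : IsSigned σ) :
    σ (zeroB n) = zeroB n := by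
  have h := hσ (zeroB n)
  rw [show negB (zeroB n) = zeroB n from Subtype.ext neg_zero] at h
  exact Subtype.ext (by simp only [zeroB] at h ⊢; omega)

lemma IsSigned.apply_posB_ne_zero {σ : Equiv.Perm (BSet n)} (hσ : IsSigned σ) (i : Fin n) :
    (σ (posB i)).1 ≠ 0 := fun h => by
  have := congrArg Subtype.val (σ.injective ((Subtype.ext h : σ (posB i) = zeroB n).trans
    hσ.map_zeroB.symm))
  simp only [posB, zeroB] at this
  omega

lemma IsSigned.ext {σ τ : Equiv.Perm (BSet n)} (hσ : IsSigned σ) (hτ : IsSigned τ)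
    (h : ∀ i, σ (posB i) = τ (posB i)) : σ = τ := by
  ext1 x
  induction x using BSet.signCases with
  | zero => rw [hσ.map_zeroB, hτ.map_zeroB]
  | pos i => exact h i
  | neg i => rw [hσ.map_negB, hτ.map_negB, h]

lemma IsSigned.injective_absIndex_apply_posB {σ : Equiv.Perm (BSet n)} (hσ : IsSigned σ) :
    Function.Injective fun i => BSet.absIndex (σ (posB i)) (hσ.apply_posB_ne_zero i) := by
  intro i j h
  have habs : (σ (posB i)).1.natAbs = (σ (posB j)).1.natAbs := by
    have := congrArg Fin.val h
    have := hσ.apply_posB_ne_zero i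
    have := hσ.apply_posB_ne_zero j
    simp only [BSet.absIndex] at *
    omega
  rcases Int.natAbs_eq_natAbs_iff.1 habs with h' | h'
  · have := congrArg Subtype.val (σ.injective (Subtype.ext h'))
    simp only [posB] at this
    exact Fin.ext (by omega)
  · have hneg : σ (posB i) = σ (negB (posB j)) := by
      rw [hσ.map_negB]
      exact Subtype.ext h'
    have := congrArg Subtype.val (σ.injective hneg)
    simp only [posB, negB] at this
    omega

end SignedSets

def signedSucc (b : Bool) (k : ℕ) : ℤ := if b then -((k : ℤ) + 1) else (k : ℤ) + 1

lemma natAbs_signedSucc (b : Bool) (k : ℕ) : (signedSucc b k).natAbs = k + 1 := by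
  cases b <;> simp [signedSucc] <;> omega

lemma signedSucc_inj {b b' : Bool} {k k' : ℕ} :
    signedSucc b k = signedSucc b' k' ↔ b = b' ∧ k = k' := by
  cases b <;> cases b' <;> simp [signedSucc] <;> omega

lemma signedSucc_decide_natAbs {y : ℤ} (hy : y ≠ 0) :
    signedSucc (decide (y < 0)) (y.natAbs - 1) = y := by
  unfold signedSucc
  split_ifs with h <;> simp only [decide_eq_true_eq] at h <;> omega

/-- A signed permutation of `{±1, …, ±n}` encoded by its absolute values (shifted down by one)
and its sign flags (`true` for negative). -/
abbrev SignedPerm (n : ℕ) : Type := Equiv.Perm (Fin n) × (Fin n → Bool)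

namespace SignedPerm

variable {n : ℕ}

def word (m : SignedPerm n) (i : Fin n) : ℤ := signedSucc (m.2 i) (m.1 i)

def seq (m : SignedPerm n) : Fin (n + 1) → ℤ := Fin.cons 0 (word m)

def desc (m : SignedPerm n) : ℕ := #(descents (seq m))

def numNeg (m : SignedPerm n) : ℕ := #(univ.filter fun i => m.2 i)

lemma desc_le (m : SignedPerm n) : desc m ≤ n :=
  (card_le_univ _).trans_eq (Fintype.card_fin n)

def inv (m : SignedPerm n) : SignedPerm n := (m.1.symm, m.2 ∘ m.1.symm)

lemma inv_inv (m : SignedPerm n) : m.inv.inv = m := by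
  ext <;> simp [inv]

lemma word_injective : Function.Injective (word : SignedPerm n → Fin n → ℤ) := by
  intro m m' h
  have h' := fun i => signedSucc_inj.1 (congrFun h i)
  exact Prod.ext (Equiv.ext fun i => Fin.ext (h' i).2) (funext fun i => (h' i).1)

lemma natAbs_word_le (m : SignedPerm n) (i : Fin n) : (word m i).natAbs ≤ n := by
  rw [word, natAbs_signedSucc]
  exact (m.1 i).isLt

/-- The odd extension of `word m` to `{-n, …, n}`. -/
def extend (m : SignedPerm n) (x : BSet n) : BSet n :=
  if hx : x.1 = 0 then x
  else ⟨x.1.sign * word m (BSet.absIndex x hx), by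
    have habs := Int.natAbs_mul x.1.sign (word m (BSet.absIndex x hx))
    rw [Int.natAbs_sign_of_ne_zero hx, one_mul] at habs
    have := natAbs_word_le m (BSet.absIndex x hx)
    rw [mem_Icc]
    omega⟩

lemma extend_val (m : SignedPerm n) {x : BSet n} (hx : x.1 ≠ 0) :
    (extend m x).1 = x.1.sign * word m (BSet.absIndex x hx) := by
  rw [extend, dif_neg hx]

lemma extend_zeroB (m : SignedPerm n) : extend m (zeroB n) = zeroB n := dif_pos rfl

lemma extend_posB (m : SignedPerm n) (i : Fin n) :
    extend m (posB i) = bif m.2 i then negB (posB (m.1 i)) else posB (m.1 i) := by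
  have hi : (posB i).1 ≠ 0 := by simp only [posB]; omega
  have hidx : BSet.absIndex (posB i) hi = i :=
    Fin.ext (by simp only [BSet.absIndex, posB]; omega)
  apply Subtype.ext
  rw [extend_val m hi, hidx]
  cases h : m.2 i <;> simp [posB, negB, word, signedSucc, h]

lemma extend_negB (m : SignedPerm n) (x : BSet n) : extend m (negB x) = negB (extend m x) := by
  by_cases hx : x.1 = 0
  · rw [extend, extend, dif_pos hx, dif_pos (by simp [negB, hx])]
  have hx' : (negB x).1 ≠ 0 := by simpa [negB] using hx
  have hidx : BSet.absIndex (negB x) hx' = BSet.absIndex x hx :=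
    Fin.ext (by simp [BSet.absIndex, negB])
  apply Subtype.ext
  show _ = -(extend m x).1
  rw [extend_val m hx', hidx, extend_val m hx]
  simp [negB, Int.sign_neg]

lemma extend_inv_extend (m : SignedPerm n) (x : BSet n) : extend m.inv (extend m x) = x := by
  induction x using BSet.signCases with
  | zero => rw [extend_zeroB, extend_zeroB]
  | pos i => cases h : m.2 i <;> simp [extend_posB, extend_negB, inv, h]
  | neg i =>
    rw [extend_negB, extend_negB]
    cases h : m.2 i <;> simp [extend_posB, extend_negB, inv, h]

def toPerm (m : SignedPerm n) : Equiv.Perm (BSet n) where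
  toFun := extend m
  invFun := extend m.inv
  left_inv := extend_inv_extend m
  right_inv x := by simpa only [inv_inv] using extend_inv_extend m.inv x

lemma toPerm_isSigned (m : SignedPerm n) : IsSigned (toPerm m) := fun x =>
  congrArg Subtype.val (extend_negB m x)

lemma toPerm_posB (m : SignedPerm n) (i : Fin n) : (toPerm m (posB i)).1 = word m i := by
  show (extend m (posB i)).1 = _
  rw [extend_posB]
  cases h : m.2 i <;> simp [word, signedSucc, posB, negB, h]

noncomputable def ofSigned (σ : Equiv.Perm (BSet n)) (hσ : IsSigned σ) : SignedPerm n :=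
  (Equiv.ofBijective _ (Finite.injective_iff_bijective.1 (hσ.injective_absIndex_apply_posB)),
    fun i => decide ((σ (posB i)).1 < 0))

lemma word_ofSigned {σ : Equiv.Perm (BSet n)} (hσ : IsSigned σ) (i : Fin n) :
    word (ofSigned σ hσ) i = (σ (posB i)).1 :=
  signedSucc_decide_natAbs (hσ.apply_posB_ne_zero i)

lemma ofSigned_toPerm (m : SignedPerm n) : ofSigned (toPerm m) (toPerm_isSigned m) = m :=
  word_injective (funext fun i => by rw [word_ofSigned, toPerm_posB])

lemma ofSigned_injective {σ τ : Equiv.Perm (BSet n)} (hσ : IsSigned σ) (hτ : IsSigned τ)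
    (h : ofSigned σ hσ = ofSigned τ hτ) : σ = τ :=
  hσ.ext hτ fun i => Subtype.ext (by rw [← word_ofSigned hσ, ← word_ofSigned hτ, h])

lemma descB_eq_desc_ofSigned {σ : Equiv.Perm (BSet n)} (hσ : IsSigned σ) :
    descB σ = desc (ofSigned σ hσ) := by
  rw [descB, desc, ← descCount_ofFn, List.ofFn_succ]
  simp [seq, word_ofSigned]

lemma negCount_eq_numNeg_ofSigned {σ : Equiv.Perm (BSet n)} (hσ : IsSigned σ) :
    negCount σ = numNeg (ofSigned σ hσ) := by
  simp [negCount, numNeg, ofSigned]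

lemma eulerianD_eq_card (n k : ℕ) :
    eulerianD n k = #{m : SignedPerm n | Even (numNeg m) ∧ desc m = k} := by
  rw [eulerianD, Fintype.card_subtype]
  refine card_bij (fun σ hσ => ofSigned σ (mem_filter.1 hσ).2.1.1) (fun σ hσ => ?_)
    (fun σ hσ τ hτ h => ofSigned_injective _ _ h) (fun m hm => ?_)
  · obtain ⟨-, ⟨hs, heven⟩, hdesc⟩ := mem_filter.1 hσ
    simpa [← negCount_eq_numNeg_ofSigned, ← descB_eq_desc_ofSigned, heven] using hdesc
  · refine ⟨toPerm m, ?_, ofSigned_toPerm m⟩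
    simpa [toPerm_isSigned, negCount_eq_numNeg_ofSigned (toPerm_isSigned m),
      descB_eq_desc_ofSigned (toPerm_isSigned m), ofSigned_toPerm] using hm

def insertPerm (π : Equiv.Perm (Fin n)) (p : Fin (n + 1)) : Equiv.Perm (Fin (n + 1)) :=
  (finSuccEquiv' p).trans (π.optionCongr.trans (finSuccEquiv' (Fin.last n)).symm)

@[simp] lemma insertPerm_apply_self (π : Equiv.Perm (Fin n)) (p : Fin (n + 1)) :
    insertPerm π p p = Fin.last n := by
  simp [insertPerm, finSuccEquiv'_at]

@[simp] lemma insertPerm_apply_succAbove (π : Equiv.Perm (Fin n)) (p : Fin (n + 1))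
    (j : Fin n) :
    insertPerm π p (p.succAbove j) = (π j).castSucc := by
  simp [insertPerm, finSuccEquiv'_succAbove, finSuccEquiv'_symm_some]

/-- Insert the entry `n + 1`, with sign flag `s`, at position `p`. -/
def insert (m : SignedPerm n) (p : Fin (n + 1)) (s : Bool) : SignedPerm (n + 1) :=
  (insertPerm m.1 p, Fin.insertNth p s m.2)

lemma word_insert (m : SignedPerm n) (p : Fin (n + 1)) (s : Bool) :
    word (insert m p s) = Fin.insertNth p (signedSucc s n) (word m) := by
  funext j
  cases j using Fin.succAboveCases p <;> simp [word, insert]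

lemma seq_insert (m : SignedPerm n) (p : Fin (n + 1)) (s : Bool) :
    seq (insert m p s) = Fin.insertNth p.succ (signedSucc s n) (seq m) := by
  rw [seq, seq, word_insert, Fin.insertNth_succ_cons]

lemma natAbs_seq_le (m : SignedPerm n) (j : Fin (n + 1)) : (seq m j).natAbs ≤ n := by
  cases j using Fin.cases with
  | zero => simp [seq]
  | succ j => simpa [seq] using natAbs_word_le m j

lemma seq_lt_or_gt_signedSucc (m : SignedPerm n) (s : Bool) :
    (∀ j, seq m j < signedSucc s n) ∨ ∀ j, signedSucc s n < seq m j := by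
  cases s
  · exact .inl fun j => by
      have := natAbs_seq_le m j; rw [signedSucc, if_neg Bool.false_ne_true]; omega
  · exact .inr fun j => by have := natAbs_seq_le m j; rw [signedSucc, if_pos rfl]; omega

lemma desc_insert_castSucc (m : SignedPerm n) (i : Fin n) (s : Bool) :
    desc (insert m i.castSucc s) = desc m + if i ∈ descents (seq m) then 0 else 1 := by
  rw [desc, seq_insert, card_descents_insertNth_castSucc _ _ (seq_lt_or_gt_signedSucc m s),
    desc]

lemma desc_insert_last (m : SignedPerm n) (s : Bool) :
    desc (insert m (Fin.last n) s) = desc m + if s then 1 else 0 := by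
  rw [desc, seq_insert, card_descents_insertNth_last, desc]
  have := natAbs_seq_le m (Fin.last n)
  cases s <;> simp only [signedSucc] <;> split_ifs <;> omega

lemma numNeg_insert (m : SignedPerm n) (p : Fin (n + 1)) (s : Bool) :
    numNeg (insert m p s) = numNeg m + if s then 1 else 0 := by
  rw [numNeg, numNeg, card_filter, card_filter, Fin.sum_univ_succAbove _ p]
  cases s <;> simp [insert, add_comm]

lemma insert_injective :
    Function.Injective fun x : SignedPerm n × Fin (n + 1) × Bool => insert x.1 x.2.1 x.2.2 := by
  rintro ⟨m, p, s⟩ ⟨m', p', s'⟩ h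
  simp only [insert, Prod.mk.injEq] at h
  obtain ⟨hπ, hflags⟩ := h
  obtain rfl : p = p' := (insertPerm m'.1 p').injective (by
    rw [insertPerm_apply_self, ← hπ, insertPerm_apply_self])
  obtain ⟨rfl, hm2⟩ := Fin.insertNth_injective2 hflags
  have hm1 : m.1 = m'.1 := Equiv.ext fun j => Fin.castSucc_injective _ (by
    rw [← insertPerm_apply_succAbove, ← insertPerm_apply_succAbove, hπ])
  rw [Prod.ext hm1 hm2]

lemma insert_bijective :
    Function.Bijective fun x : SignedPerm n × Fin (n + 1) × Bool => insert x.1 x.2.1 x.2.2 := by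
  rw [Fintype.bijective_iff_injective_and_card]
  refine ⟨insert_injective, ?_⟩
  simp only [Fintype.card_prod, Fintype.card_perm, Fintype.card_fun, Fintype.card_fin,
    Fintype.card_bool, Nat.factorial_succ]
  ring

lemma sum_eq_sum_insert {M : Type*} [AddCommMonoid M] (f : SignedPerm (n + 1) → M) :
    ∑ m', f m' = ∑ m : SignedPerm n, ∑ p, ∑ s, f (insert m p s) := by
  rw [← Fintype.sum_bijective _ insert_bijective _ f fun _ => rfl, Fintype.sum_prod_type]
  simp only [Fintype.sum_prod_type]

lemma sum_X_pow_desc_insert {R : Type*} [CommRing R] (m : SignedPerm n) (s : Bool) :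
    ∑ p, (X : R[X]) ^ desc (insert m p s) =
      eulerOp R n (X ^ desc m) + (if s then X else 1) * X ^ desc m := by
  have hcast : ∀ i : Fin n, (X : R[X]) ^ desc (insert m i.castSucc s) =
      if i ∈ descents (seq m) then X ^ desc m else X ^ (desc m + 1) := fun i => by
    rw [desc_insert_castSucc]
    split_ifs <;> rfl
  rw [Fin.sum_univ_castSucc, Finset.sum_congr rfl fun i _ => hcast i, sum_ite, sum_const,
    sum_const, filter_not, filter_mem_eq_inter, univ_inter, ← compl_eq_univ_sdiff, card_compl,
    Fintype.card_fin, ← desc, eulerOp_X_pow (desc_le m), desc_insert_last]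
  cases s <;> simp [pow_succ, mul_comm]

end SignedPerm

open SignedPerm

/-- `W_c(n)`; for `c = 1` this is the type B Eulerian polynomial. -/
noncomputable def negDescPoly {R : Type*} [CommRing R] (c : R) (n : ℕ) : R[X] :=
  ∑ m : SignedPerm n, C (c ^ numNeg m) * X ^ desc m

section NegDescPoly

variable {R : Type*} [CommRing R]

lemma negDescPoly_zero (c : R) : negDescPoly c 0 = 1 := by
  simp [negDescPoly, numNeg, desc, descents]

lemma negDescPoly_succ (c : R) (n : ℕ) :
    negDescPoly c (n + 1) =
      C (1 + c) * eulerOp R n (negDescPoly c n) + (1 + C c * X) * negDescPoly c n := by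
  have hm : ∀ m : SignedPerm n,
      ∑ p, ∑ s, C (c ^ numNeg (insert m p s)) * (X : R[X]) ^ desc (insert m p s) =
        C (c ^ numNeg m) * (C (1 + c) * eulerOp R n (X ^ desc m) + (1 + C c * X) * X ^ desc m) :=
    fun m => by
      simp only [numNeg_insert, pow_add, map_mul, mul_assoc]
      rw [sum_comm, Fintype.sum_bool]
      simp only [← mul_sum, sum_X_pow_desc_insert]
      simp only [if_true, if_false, Bool.false_eq_true, pow_one, pow_zero, map_one, map_add]
      ring
  rw [negDescPoly, sum_eq_sum_insert, sum_congr rfl fun m _ => hm m, negDescPoly, map_sum,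
    mul_sum, mul_sum, ← sum_add_distrib]
  refine sum_congr rfl fun m _ => ?_
  rw [eulerOp_C_mul]
  ring

lemma negDescPoly_neg_one (n : ℕ) : negDescPoly (-1 : R) n = (1 - X) ^ n := by
  induction n with
  | zero => rw [negDescPoly_zero, pow_zero]
  | succ n ih => rw [negDescPoly_succ, ih, pow_succ]; simp; ring

end NegDescPoly

lemma polyDP_eq_sum (n : ℕ) :
    polyDP n = ∑ m : SignedPerm n with Even (numNeg m), X ^ desc m := by
  rw [polyDP, ← sum_fiberwise_of_maps_to (g := desc) (t := range (n + 1))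
    fun m _ => mem_range.2 (Nat.lt_succ_of_le (desc_le m))]
  refine sum_congr rfl fun k _ => ?_
  rw [sum_congr rfl fun m hm => by rw [(mem_filter.1 hm).2], sum_const, filter_filter,
    eulerianD_eq_card, nsmul_eq_mul, C_eq_natCast]

lemma two_mul_polyDP (n : ℕ) : 2 * polyDP n = negDescPoly 1 n + negDescPoly (-1) n := by
  rw [polyDP_eq_sum, negDescPoly, negDescPoly, ← sum_add_distrib, sum_filter, mul_sum]
  refine sum_congr rfl fun m _ => ?_
  rcases Nat.even_or_odd (numNeg m) with h | h
  · rw [if_pos h, h.neg_one_pow, one_pow, map_one]; ring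
  · rw [if_neg (Nat.not_even_iff_odd.2 h), h.neg_one_pow, one_pow, map_one, map_neg, map_one]
    ring

open Polynomial in
theorem stmt15 (n : ℕ) (hn : 1 ≤ n) :
    polyDP n = (C (2 * (n : ℝ)) * X - X + 1) * polyDP (n - 1)
      + 2 * X * (1 - X) * derivative (polyDP (n - 1))
      - X * (1 - X) ^ (n - 1) := by
  obtain ⟨n, rfl⟩ : ∃ k, n = k + 1 := ⟨n - 1, by omega⟩
  rw [Nat.add_sub_cancel]
  have hB : negDescPoly (1 : ℝ) n = 2 * polyDP n - (1 - X) ^ n := by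
    rw [two_mul_polyDP, negDescPoly_neg_one]; ring
  refine mul_left_cancel₀ (two_ne_zero : (2 : ℝ[X]) ≠ 0) ?_
  rw [two_mul_polyDP, negDescPoly_succ, negDescPoly_neg_one, hB, map_sub,
    eulerOp_one_sub_X_pow, show (2 : ℝ[X]) * polyDP n = C 2 * polyDP n from rfl, eulerOp_C_mul,
    eulerOp_apply]
  simp only [map_add, map_mul, map_one, map_ofNat, map_natCast, Nat.cast_add, Nat.cast_one]
  ring
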